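/- Let Λ be a commutative monoid and λ ∈ Λ. Let fSets_λ be the category of pairs (J, λ̲ : J → Λ) with J a finite nonempty set and Σ_j λ̲(j) = λ, with morphisms the surjections compatible with fiberwise-sum pushforward of λ̲; and let cTw(fSets)_λ be the category of triples (λ̲, J ↠ K) with Σ_j λ̲(j) = λ and morphisms as in the twisted arrow category of fSets compatible with pushforward. Then the functor h^u : cTw(fSets)_λ → (fSets_λ)^op sending (λ̲, J →^φ K) to (K, φ_*λ̲) is cofinal; specifically, for every object ξ = (K', μ̲) ∈ fSets_λ, the comma category cTw(fSets)_λ ×_{(fSets_λ)^op} ((fSets_λ)^op)_{ξ/} is equivalent to the product ∏_{k ∈ K'} cTw(fSets)^{μ̲(k)}, and each category cTw(fSets)^{μ} (for μ ∈ Λ) is connected. -/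

import Mathlib

open CategoryTheory Function Limits

theorem push_fiber {Λ : Type} [AddCommMonoid Λ] {J₁ J₂ : Type} [Finite J₁] [Finite J₂]
    (φ : J₁ → J₂) (w₁ : J₁ → Λ) (w₂ : J₂ → Λ)
    (hw : ∀ b, ∑ᶠ a ∈ φ ⁻¹' {b}, w₁ a = w₂ b) (S : Set J₂) :
    ∑ᶠ a ∈ φ ⁻¹' S, w₁ a = ∑ᶠ b ∈ S, w₂ b := by
  rw [← Set.biUnion_preimage_singleton φ S, finsum_mem_biUnion]
  · exact finsum_mem_congr rfl fun b _ => hw b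
  · intro b₁ _ b₂ _ hne
    refine Set.disjoint_left.mpr fun a ha₁ ha₂ => hne ?_
    have h₁ : φ a = b₁ := ha₁
    have h₂ : φ a = b₂ := ha₂
    rw [← h₁, h₂]
  · exact Set.toFinite _
  · exact fun b _ => Set.toFinite _

theorem push_comp {Λ : Type} [AddCommMonoid Λ] {J₁ J₂ J₃ : Type} [Finite J₁] [Finite J₂]
    (τ₁ : J₁ → J₂) (τ₂ : J₂ → J₃) (w : J₁ → Λ) (c : J₃) :
    ∑ᶠ a ∈ (τ₂ ∘ τ₁) ⁻¹' {c}, w a = ∑ᶠ b ∈ τ₂ ⁻¹' {c}, ∑ᶠ a ∈ τ₁ ⁻¹' {b}, w a := by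
  rw [Set.preimage_comp]
  exact push_fiber τ₁ w (fun b => ∑ᶠ a ∈ τ₁ ⁻¹' {b}, w a) (fun _ => rfl) _

theorem push_total {Λ : Type} [AddCommMonoid Λ] {J K : Type} [Finite J] [Finite K]
    (q : J → K) (w : J → Λ) :
    ∑ᶠ k, ∑ᶠ j ∈ q ⁻¹' {k}, w j = ∑ᶠ j, w j := by
  rw [← finsum_mem_univ (f := fun k => ∑ᶠ j ∈ q ⁻¹' {k}, w j), ← finsum_mem_univ (f := w),
    ← Set.preimage_univ (f := q)]
  exact (push_fiber q w _ (fun _ => rfl) Set.univ).symm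

/-- An object of `fSets^λ` (resp. `fSets_λ`): a finite nonempty set `J` with a weight
function `λ̲ : J → Λ` of total weight `λ`. -/
structure GrSet (Λ : Type) [AddCommMonoid Λ] (lam : Λ) : Type 1 where
  J : Type
  jFin : Finite J
  jNe : Nonempty J
  w : J → Λ
  hw : ∑ᶠ j, w j = lam

/-- A morphism in `fSets^λ`: a surjection compatible with fiberwise-sum pushforward of
the weights. -/
structure GrSetHom {Λ : Type} [AddCommMonoid Λ] {lam : Λ} (A B : GrSet Λ lam) : Type where
  τ : A.J → B.J
  hτ : Function.Surjective τ
  hw : ∀ b, ∑ᶠ a ∈ τ ⁻¹' {b}, A.w a = B.w b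

theorem GrSetHom.ext' {Λ : Type} [AddCommMonoid Λ] {lam : Λ} {A B : GrSet Λ lam} :
    ∀ {f g : GrSetHom A B}, f.τ = g.τ → f = g
  | ⟨_, _, _⟩, ⟨_, _, _⟩, rfl => rfl

instance grSetCategory (Λ : Type) [AddCommMonoid Λ] (lam : Λ) : Category (GrSet Λ lam) where
  Hom := GrSetHom
  id A := ⟨_root_.id, Function.surjective_id, fun b => by
    rw [show (_root_.id : A.J → A.J) ⁻¹' {b} = {b} from Set.preimage_id]
    exact finsum_mem_singleton⟩
  comp := fun {A B C} f g => ⟨g.τ ∘ f.τ, g.hτ.comp f.hτ, fun c => by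
    have := A.jFin; have := B.jFin
    rw [push_comp f.τ g.τ A.w c, finsum_mem_congr rfl fun b _ => f.hw b]
    exact g.hw c⟩
  id_comp := fun f => GrSetHom.ext' rfl
  comp_id := fun f => GrSetHom.ext' rfl
  assoc := fun f g h => GrSetHom.ext' rfl

/-- An object of `cTw(fSets)^λ` (resp. `cTw(fSets)_λ`): a surjection `J ↠ K` of finite
nonempty sets together with a weight function `λ̲ : J → Λ` of total weight `λ`. -/
structure GrTw (Λ : Type) [AddCommMonoid Λ] (lam : Λ) : Type 1 where
  J : Type
  K : Type
  jFin : Finite J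
  kFin : Finite K
  jNe : Nonempty J
  kNe : Nonempty K
  q : J → K
  hq : Function.Surjective q
  w : J → Λ
  hw : ∑ᶠ j, w j = lam

/-- A morphism in `cTw(fSets)^λ`: a twisted-arrow morphism `(φ : J₁ → J₂, ψ : K₂ → K₁)`
with `φ_* λ̲¹ = λ̲²`. -/
structure GrTwHom {Λ : Type} [AddCommMonoid Λ] {lam : Λ} (A B : GrTw Λ lam) : Type where
  φ : A.J → B.J
  ψ : B.K → A.K
  hφ : Function.Surjective φ
  hψ : Function.Surjective ψ
  hcomm : ∀ j, ψ (B.q (φ j)) = A.q j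
  hw : ∀ b, ∑ᶠ a ∈ φ ⁻¹' {b}, A.w a = B.w b

theorem GrTwHom.ext' {Λ : Type} [AddCommMonoid Λ] {lam : Λ} {A B : GrTw Λ lam} :
    ∀ {f g : GrTwHom A B}, f.φ = g.φ → f.ψ = g.ψ → f = g
  | ⟨_, _, _, _, _, _⟩, ⟨_, _, _, _, _, _⟩, rfl, rfl => rfl

instance grTwCategory (Λ : Type) [AddCommMonoid Λ] (lam : Λ) : Category (GrTw Λ lam) where
  Hom := GrTwHom
  id A := ⟨_root_.id, _root_.id, Function.surjective_id, Function.surjective_id,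
    fun _ => rfl, fun b => by
      rw [show (_root_.id : A.J → A.J) ⁻¹' {b} = {b} from Set.preimage_id]
      exact finsum_mem_singleton⟩
  comp := fun {A B C} f g => ⟨g.φ ∘ f.φ, f.ψ ∘ g.ψ, g.hφ.comp f.hφ, f.hψ.comp g.hψ,
    fun j => by simp only [Function.comp_apply, g.hcomm, f.hcomm],
    fun c => by
      have := A.jFin; have := B.jFin
      rw [push_comp f.φ g.φ A.w c, finsum_mem_congr rfl fun b _ => f.hw b]
      exact g.hw c⟩
  id_comp := fun f => GrTwHom.ext' rfl rfl
  comp_id := fun f => GrTwHom.ext' rfl rfl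
  assoc := fun f g h => GrTwHom.ext' rfl rfl

/-- The pushforward object `(K, φ_* λ̲)` of `(λ̲, J →^φ K)`. -/
noncomputable def huObj (Λ : Type) [AddCommMonoid Λ] (lam : Λ) (A : GrTw Λ lam) : GrSet Λ lam where
  J := A.K
  jFin := A.kFin
  jNe := A.kNe
  w := fun k => ∑ᶠ j ∈ A.q ⁻¹' {k}, A.w j
  hw := by
    have := A.jFin; have := A.kFin
    rw [push_total A.q A.w]
    exact A.hw

/-- The functor `h^u : cTw(fSets)_λ → (fSets_λ)^op` sending `(λ̲, J →^φ K)` to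
`(K, φ_* λ̲)`. -/
noncomputable def hu (Λ : Type) [AddCommMonoid Λ] (lam : Λ) : GrTw Λ lam ⥤ (GrSet Λ lam)ᵒᵖ where
  obj A := Opposite.op (huObj Λ lam A)
  map := fun {A B} f => Quiver.Hom.op
    (show huObj Λ lam B ⟶ huObj Λ lam A from
      ⟨f.ψ, f.hψ, fun k => by
        have := A.jFin; have := A.kFin; have := B.jFin; have := B.kFin
        have h1 : ∑ᶠ k₂ ∈ f.ψ ⁻¹' {k}, ∑ᶠ j₂ ∈ B.q ⁻¹' {k₂}, B.w j₂
            = ∑ᶠ j₂ ∈ (f.ψ ∘ B.q) ⁻¹' {k}, B.w j₂ := (push_comp B.q f.ψ B.w k).symm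
        have h2 : ∑ᶠ j₂ ∈ (f.ψ ∘ B.q) ⁻¹' {k}, B.w j₂
            = ∑ᶠ j₁ ∈ f.φ ⁻¹' ((f.ψ ∘ B.q) ⁻¹' {k}), A.w j₁ :=
          (push_fiber f.φ A.w B.w f.hw _).symm
        have h3 : f.φ ⁻¹' ((f.ψ ∘ B.q) ⁻¹' {k}) = A.q ⁻¹' {k} := by
          ext j₁
          simp only [Set.mem_preimage, Set.mem_singleton_iff, Function.comp_apply]
          rw [f.hcomm]
        show ∑ᶠ k₂ ∈ f.ψ ⁻¹' {k}, ∑ᶠ j₂ ∈ B.q ⁻¹' {k₂}, B.w j₂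
            = ∑ᶠ j₁ ∈ A.q ⁻¹' {k}, A.w j₁
        rw [h1, h2, h3]⟩)
  map_id _ := Quiver.Hom.unop_inj (GrSetHom.ext' rfl)
  map_comp _ _ := Quiver.Hom.unop_inj (GrSetHom.ext' rfl)


/-!
An object of the comma category under `ξ = (K', μ̲)` is a twisted arrow `(λ̲, J ↠ K)` with a
surjection `K ↠ K'` along which the pushed-forward weights add up to `μ̲`. Cutting it into fibres
over the points `k ∈ K'` gives objects of `cTw(fSets)^{μ̲(k)}`; conversely a family of such
objects glues back by disjoint union, and morphisms are glued fibrewise. Every `(λ̲, J ↠ K)` is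
joined to the point `(μ, pt ↠ pt)` by the span `(λ̲, J ↠ K) ← (λ̲, J ↠ pt) → (μ, pt ↠ pt)`, so
`cTw(fSets)^μ` is connected; the same spans taken componentwise connect the product, hence every
comma category of `h^u` is connected.
-/

noncomputable section

open Opposite

attribute [local instance] GrSet.jFin GrSet.jNe GrTw.jFin GrTw.kFin GrTw.jNe GrTw.kNe

theorem finsum_mem_preimage_equiv_singleton {α β M : Type*} [AddCommMonoid M] (e : α ≃ β)
    (w : α → M) (b : β) : ∑ᶠ a ∈ e ⁻¹' {b}, w a = w (e.symm b) := by
  rw [← e.image_symm_eq_preimage, Set.image_singleton, finsum_mem_singleton]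

theorem finsum_mem_preimage_subtype {α β M : Type*} [AddCommMonoid M] {s : Set α} {t : Set β}
    (F : s → t) (G : α → β) (hFG : ∀ a : s, (F a : β) = G a) (w : α → M) {b : β} (hb : b ∈ t)
    (hsub : G ⁻¹' {b} ⊆ s) :
    ∑ᶠ a ∈ F ⁻¹' {⟨b, hb⟩}, w a = ∑ᶠ a ∈ G ⁻¹' {b}, w a := by
  have himage : Subtype.val '' (F ⁻¹' {⟨b, hb⟩}) = G ⁻¹' {b} := by
    ext a
    simp only [Set.mem_image, Set.mem_preimage, Set.mem_singleton_iff]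
    constructor
    · rintro ⟨a, ha, rfl⟩
      rw [← hFG, ha]
    · intro ha
      exact ⟨⟨a, hsub ha⟩, Subtype.ext ((hFG _).trans ha), rfl⟩
  rw [← himage, finsum_mem_image Subtype.val_injective.injOn]

theorem finsum_mem_sigma_fst_preimage {ι M : Type*} [AddCommMonoid M] {β : ι → Type*}
    (f : (Σ i, β i) → M) (i : ι) : ∑ᶠ p ∈ Sigma.fst ⁻¹' {i}, f p = ∑ᶠ x, f ⟨i, x⟩ := by
  rw [← Set.range_sigmaMk i, finsum_mem_range sigma_mk_injective]

theorem isConnected_of_spans {C : Type*} [Category C] (P : C) (M : C → C)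
    (f : ∀ A, M A ⟶ A) (g : ∀ A, M A ⟶ P) : IsConnected C :=
  have : Nonempty C := ⟨P⟩
  zigzag_isConnected fun A B =>
    (Zigzag.of_inv_hom (f A) (g A)).trans (Zigzag.of_inv_hom (f B) (g B)).symm

namespace GrTw

variable {Λ : Type} [AddCommMonoid Λ]

def pt (mu : Λ) : GrTw Λ mu where
  J := PUnit
  K := PUnit
  jFin := inferInstance
  kFin := inferInstance
  jNe := inferInstance
  kNe := inferInstance
  q := id
  hq := surjective_id
  w _ := mu
  hw := finsum_unique _

def collapse {mu : Λ} (A : GrTw Λ mu) : GrTw Λ mu where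
  J := A.J
  K := PUnit
  jFin := A.jFin
  kFin := inferInstance
  jNe := A.jNe
  kNe := inferInstance
  q _ := ⟨⟩
  hq _ := ⟨Classical.arbitrary _, rfl⟩
  w := A.w
  hw := A.hw

def collapseHom {mu : Λ} (A : GrTw Λ mu) : collapse A ⟶ A where
  φ := id
  ψ _ := ⟨⟩
  hφ := surjective_id
  hψ _ := ⟨Classical.arbitrary _, rfl⟩
  hcomm _ := rfl
  hw := finsum_mem_preimage_equiv_singleton (Equiv.refl A.J) A.w

def collapseToPt {mu : Λ} (A : GrTw Λ mu) : collapse A ⟶ pt mu where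
  φ _ := ⟨⟩
  ψ := id
  hφ _ := ⟨Classical.arbitrary _, rfl⟩
  hψ := surjective_id
  hcomm _ := rfl
  hw _ := (finsum_mem_congr (Set.eq_univ_of_forall fun _ => rfl) fun _ _ => rfl).trans
    ((finsum_mem_univ _).trans A.hw)

instance isConnected (mu : Λ) : IsConnected (GrTw Λ mu) :=
  isConnected_of_spans (pt mu) collapse collapseHom collapseToPt

instance isConnected_pi {K : Type*} (w : K → Λ) : IsConnected (∀ k, GrTw Λ (w k)) :=
  isConnected_of_spans (fun k => pt (w k)) (fun A k => collapse (A k))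
    (fun A k => collapseHom (A k)) (fun A k => collapseToPt (A k))

def isoMk {lam : Λ} {A B : GrTw Λ lam} (eJ : A.J ≃ B.J) (eK : A.K ≃ B.K)
    (hq : ∀ j, B.q (eJ j) = eK (A.q j)) (hw : ∀ j, B.w (eJ j) = A.w j) : A ≅ B where
  hom :=
    { φ := eJ
      ψ := eK.symm
      hφ := eJ.surjective
      hψ := eK.symm.surjective
      hcomm j := by rw [hq, Equiv.symm_apply_apply]
      hw b := by rw [finsum_mem_preimage_equiv_singleton, ← hw, Equiv.apply_symm_apply] }
  inv :=
    { φ := eJ.symm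
      ψ := eK
      hφ := eJ.symm.surjective
      hψ := eK.surjective
      hcomm j := by rw [← hq, Equiv.apply_symm_apply]
      hw a := by rw [finsum_mem_preimage_equiv_singleton, Equiv.symm_symm, hw] }
  hom_inv_id := GrTwHom.ext' (funext eJ.symm_apply_apply) (funext eK.symm_apply_apply)
  inv_hom_id := GrTwHom.ext' (funext eJ.apply_symm_apply) (funext eK.apply_symm_apply)

end GrTw

section Fibers

variable {Λ : Type} [AddCommMonoid Λ] {lam : Λ} (ξ : GrSet Λ lam)

def GrTw.fiber (X : GrTw Λ lam) (t : huObj Λ lam X ⟶ ξ) (k : ξ.J) : GrTw Λ (ξ.w k) where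
  J := (t.τ ∘ X.q) ⁻¹' {k}
  K := t.τ ⁻¹' {k}
  jFin := inferInstance
  kFin := inferInstance
  jNe :=
    let ⟨c, hc⟩ := t.hτ k
    let ⟨j, hj⟩ := X.hq c
    ⟨⟨j, show t.τ (X.q j) = k by rw [hj, hc]⟩⟩
  kNe :=
    let ⟨c, hc⟩ := t.hτ k
    ⟨⟨c, hc⟩⟩
  q j := ⟨X.q j, j.2⟩
  hq := fun ⟨c, hc⟩ =>
    let ⟨j, hj⟩ := X.hq c
    ⟨⟨j, show t.τ (X.q j) = k by rw [hj, hc]⟩, Subtype.ext hj⟩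
  w j := X.w j
  hw := by
    rw [finsum_set_coe_eq_finsum_mem]
    exact (push_comp X.q t.τ X.w k).trans (t.hw k)

variable {ξ}

def GrTwHom.fiberMap {X Y : GrTw Λ lam} {t : huObj Λ lam X ⟶ ξ} {s : huObj Λ lam Y ⟶ ξ}
    (g : GrTwHom X Y) (tri : ∀ c, t.τ (g.ψ c) = s.τ c) (k : ξ.J) :
    X.fiber ξ t k ⟶ Y.fiber ξ s k :=
  have hqφ : ∀ j, s.τ (Y.q (g.φ j)) = t.τ (X.q j) := fun j => by rw [← tri, g.hcomm]
  { φ := fun j => ⟨g.φ j.1, (hqφ j.1).trans j.2⟩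
    ψ := fun c => ⟨g.ψ c.1, (tri c.1).trans c.2⟩
    hφ := fun ⟨b, hb⟩ =>
      let ⟨a, ha⟩ := g.hφ b
      ⟨⟨a, (hqφ a).symm.trans (ha ▸ hb)⟩, Subtype.ext ha⟩
    hψ := fun ⟨c, hc⟩ =>
      let ⟨c', hc'⟩ := g.hψ c
      ⟨⟨c', (tri c').symm.trans (hc' ▸ hc)⟩, Subtype.ext hc'⟩
    hcomm := fun j => Subtype.ext (g.hcomm j.1)
    hw := fun ⟨b, hb⟩ =>
      (finsum_mem_preimage_subtype _ g.φ (fun _ => rfl) X.w hb fun a (ha : g.φ a = b) =>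
        (hqφ a).symm.trans (ha ▸ hb)).trans (g.hw b) }

theorem hu_structuredArrow_w {X Y : StructuredArrow (op ξ) (hu Λ lam)} (g : X ⟶ Y)
    (c : Y.right.K) : X.hom.unop.τ (g.right.ψ c) = Y.hom.unop.τ c :=
  congrFun (congrArg GrSetHom.τ (congrArg Quiver.Hom.unop (StructuredArrow.w g))) c

variable (ξ)

def fiberFunctor : StructuredArrow (op ξ) (hu Λ lam) ⥤ ∀ k : ξ.J, GrTw Λ (ξ.w k) where
  obj X k := X.right.fiber ξ X.hom.unop k
  map g k := GrTwHom.fiberMap g.right (hu_structuredArrow_w g) k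
  map_id _ := funext fun _ => GrTwHom.ext' rfl rfl
  map_comp _ _ := funext fun _ => GrTwHom.ext' rfl rfl

instance : (fiberFunctor ξ).Faithful where
  map_injective {X Y} {g h} hgh := by
    apply StructuredArrow.hom_ext
    apply GrTwHom.ext'
    · funext j
      exact congrArg Subtype.val
        (congrFun (congrArg GrTwHom.φ (congrFun hgh (X.hom.unop.τ (X.right.q j)))) ⟨j, rfl⟩)
    · funext c
      exact congrArg Subtype.val
        (congrFun (congrArg GrTwHom.ψ (congrFun hgh (Y.hom.unop.τ c))) ⟨c, rfl⟩)

section Glue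

variable {ξ} {X Y : StructuredArrow (op ξ) (hu Λ lam)}
  (m : ∀ k, (fiberFunctor ξ).obj X k ⟶ (fiberFunctor ξ).obj Y k)

def gluedφ (j : X.right.J) : Y.right.J :=
  ((m (X.hom.unop.τ (X.right.q j))).φ ⟨j, rfl⟩).1

def gluedψ (c : Y.right.K) : X.right.K :=
  ((m (Y.hom.unop.τ c)).ψ ⟨c, rfl⟩).1

theorem gluedφ_eq (j : X.right.J) (k : ξ.J) (h : X.hom.unop.τ (X.right.q j) = k) :
    gluedφ m j = ((m k).φ ⟨j, h⟩).1 := by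
  subst h; rfl

theorem gluedψ_eq (c : Y.right.K) (k : ξ.J) (h : Y.hom.unop.τ c = k) :
    gluedψ m c = ((m k).ψ ⟨c, h⟩).1 := by
  subst h; rfl

theorem gluedφ_over (j : X.right.J) :
    Y.hom.unop.τ (Y.right.q (gluedφ m j)) = X.hom.unop.τ (X.right.q j) :=
  ((m (X.hom.unop.τ (X.right.q j))).φ ⟨j, rfl⟩).2

theorem gluedψ_over (c : Y.right.K) : X.hom.unop.τ (gluedψ m c) = Y.hom.unop.τ c :=
  ((m (Y.hom.unop.τ c)).ψ ⟨c, rfl⟩).2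

def gluedHom : X.right ⟶ Y.right where
  φ := gluedφ m
  ψ := gluedψ m
  hφ b :=
    let ⟨a, ha⟩ := (m (Y.hom.unop.τ (Y.right.q b))).hφ ⟨b, rfl⟩
    ⟨a.1, (gluedφ_eq m a.1 _ a.2).trans (congrArg Subtype.val ha)⟩
  hψ c :=
    let ⟨c', hc'⟩ := (m (X.hom.unop.τ c)).hψ ⟨c, rfl⟩
    ⟨c'.1, (gluedψ_eq m c'.1 _ c'.2).trans (congrArg Subtype.val hc')⟩
  hcomm j := by
    rw [gluedψ_eq m _ _ (gluedφ_over m j)]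
    exact congrArg Subtype.val ((m (X.hom.unop.τ (X.right.q j))).hcomm ⟨j, rfl⟩)
  hw b := by
    set k := Y.hom.unop.τ (Y.right.q b)
    have hsub : gluedφ m ⁻¹' {b} ⊆ (X.hom.unop.τ ∘ X.right.q) ⁻¹' {k} :=
      fun a (ha : gluedφ m a = b) => (gluedφ_over m a).symm.trans (by rw [ha])
    have hrestrict := finsum_mem_preimage_subtype (m k).φ (gluedφ m)
      (fun a => (gluedφ_eq m a.1 k a.2).symm) X.right.w
      (rfl : Y.hom.unop.τ (Y.right.q b) = k) hsub
    exact hrestrict.symm.trans ((m k).hw ⟨b, rfl⟩)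

theorem gluedHom_w : X.hom ≫ (hu Λ lam).map (gluedHom m) = Y.hom :=
  Quiver.Hom.unop_inj (GrSetHom.ext' (funext (gluedψ_over m)))

end Glue

instance : (fiberFunctor ξ).Full where
  map_surjective {X Y} m := by
    refine ⟨StructuredArrow.homMk (gluedHom m) (gluedHom_w m), funext fun k => ?_⟩
    apply GrTwHom.ext'
    · funext a
      exact Subtype.ext (gluedφ_eq m a.1 k a.2)
    · funext c
      exact Subtype.ext (gluedψ_eq m c.1 k c.2)

section Sigma

variable (Xf : ∀ k : ξ.J, GrTw Λ (ξ.w k))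

def GrTw.sigma : GrTw Λ lam where
  J := Σ k, (Xf k).J
  K := Σ k, (Xf k).K
  jFin := inferInstance
  kFin := inferInstance
  jNe := ⟨⟨Classical.arbitrary _, Classical.arbitrary _⟩⟩
  kNe := ⟨⟨Classical.arbitrary _, Classical.arbitrary _⟩⟩
  q p := ⟨p.1, (Xf p.1).q p.2⟩
  hq := fun ⟨k, c⟩ =>
    let ⟨j, hj⟩ := (Xf k).hq c
    ⟨⟨k, j⟩, congrArg (Sigma.mk k) hj⟩
  w p := (Xf p.1).w p.2
  hw := by
    rw [← push_total Sigma.fst,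
      finsum_congr fun k => (finsum_mem_sigma_fst_preimage _ k).trans (Xf k).hw]
    exact ξ.hw

def GrTw.sigmaProj : huObj Λ lam (GrTw.sigma ξ Xf) ⟶ ξ where
  τ := Sigma.fst
  hτ k := ⟨⟨k, Classical.arbitrary _⟩, rfl⟩
  hw k := (push_comp (GrTw.sigma ξ Xf).q Sigma.fst (GrTw.sigma ξ Xf).w k).symm.trans
    ((finsum_mem_sigma_fst_preimage _ k).trans (Xf k).hw)

def GrTw.fiberSigmaIso (k : ξ.J) :
    (GrTw.sigma ξ Xf).fiber ξ (GrTw.sigmaProj ξ Xf) k ≅ Xf k :=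
  GrTw.isoMk (Equiv.sigmaSubtype k) (Equiv.sigmaSubtype k) (fun ⟨⟨_, _⟩, rfl⟩ => rfl)
    (fun ⟨⟨_, _⟩, rfl⟩ => rfl)

end Sigma

instance : (fiberFunctor ξ).EssSurj where
  mem_essImage Xf :=
    ⟨StructuredArrow.mk (GrTw.sigmaProj ξ Xf).op, ⟨Pi.isoMk (GrTw.fiberSigmaIso ξ Xf)⟩⟩

instance : (fiberFunctor ξ).IsEquivalence where

end Fibers

end

theorem stmt17 (Λ : Type) [AddCommMonoid Λ] (lam : Λ) :
    (hu Λ lam).Final ∧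
    (∀ ξ : GrSet Λ lam,
        Nonempty (StructuredArrow (Opposite.op ξ) (hu Λ lam) ≌ ∀ k : ξ.J, GrTw Λ (ξ.w k))) ∧
    (∀ mu : Λ, IsConnected (GrTw Λ mu)) :=
  ⟨⟨fun d => isConnected_of_equivalent (fiberFunctor d.unop).asEquivalence.symm⟩,
    fun ξ => ⟨(fiberFunctor ξ).asEquivalence⟩, GrTw.isConnected⟩
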